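/- arXiv:hep-th/9610200 — 2 statements merged into one kernel-verified Lean document; each statement's English description precedes it below -/
import Mathlib

section
/- For γ = -2 and constants c > 0, a = 3/(8c), the function u(x,t) = -2(√((ct² - a)/x) - 1) solves u_tt = [(1 + u/γ)^{γ-1}]_xx, i.e., u_tt = [(1 - u/2)^{-3}]_xx, on the domain where x > 0 and ct² - a > 0. -/
/-!
On the domain, `1 - u/2 = √((ct² - a)/x)`, so both sides of the equation separate. In `t`, `u` is
affine in `√(ct² - a)` with slope `-2/√x`, and `(√(ct² - a))'' = -ac/(ct² - a)^{3/2}`. In `x`,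
`(1 - u/2)^{-3} = x^{3/2}/(ct² - a)^{3/2}`. Both second derivatives are then multiples of
`x^{-1/2} (ct² - a)^{-3/2}`, with factors `2ac` and `3/4`, and `a = 3/(8c)` makes these agree.
-/

open Real Filter Topology

section

variable {a c : ℝ}

theorem hasDerivAt_sqrt_quadratic {s : ℝ} (h : a < c * s ^ 2) :
    HasDerivAt (fun s => √(c * s ^ 2 - a)) (c * s / √(c * s ^ 2 - a)) s := by
  have hq : HasDerivAt (fun s : ℝ => c * s ^ 2 - a) (c * (2 * s)) s := by
    simpa using ((hasDerivAt_pow 2 s).const_mul c).sub_const a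
  convert hq.sqrt (sub_pos.2 h).ne' using 1
  field_simp

theorem deriv_deriv_sqrt_quadratic {t : ℝ} (h : a < c * t ^ 2) :
    deriv (deriv fun s => √(c * s ^ 2 - a)) t = -(a * c) / (c * t ^ 2 - a) ^ (3 / 2 : ℝ) := by
  have hderiv : deriv (fun s => √(c * s ^ 2 - a)) =ᶠ[𝓝 t] fun s => c * s / √(c * s ^ 2 - a) := by
    have hopen : IsOpen {s : ℝ | a < c * s ^ 2} := isOpen_lt continuous_const (by fun_prop)
    filter_upwards [hopen.mem_nhds h] with s hs using (hasDerivAt_sqrt_quadratic hs).deriv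
  have hP : 0 < c * t ^ 2 - a := sub_pos.2 h
  have hsqrtP : 0 < √(c * t ^ 2 - a) := sqrt_pos.2 hP
  have hpow : (c * t ^ 2 - a) ^ (3 / 2 : ℝ) = (c * t ^ 2 - a) * √(c * t ^ 2 - a) := by
    rw [sqrt_eq_rpow, ← rpow_one_add' hP.le (by norm_num)]
    norm_num
  rw [hderiv.deriv_eq, (((hasDerivAt_id' t).const_mul c).fun_div (hasDerivAt_sqrt_quadratic h)
    hsqrtP.ne').deriv, hpow]
  field_simp
  rw [sq_sqrt hP.le]
  ring

end

theorem sqrt_div_rpow_neg {p y : ℝ} (hp : 0 ≤ p) (hy : 0 ≤ y) (r : ℝ) :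
    √(p / y) ^ (-r) = y ^ (r / 2) / p ^ (r / 2) := by
  rw [sqrt_eq_rpow, ← rpow_mul (div_nonneg hp hy), show 1 / 2 * -r = -(r / 2) by ring,
    rpow_neg (div_nonneg hp hy), div_rpow hp hy, inv_div]

theorem deriv_deriv_rpow_const (p : ℝ) :
    deriv (deriv fun x : ℝ => x ^ p) = fun x => p * ((p - 1) * x ^ (p - 1 - 1)) := by
  simp only [deriv_rpow_const', deriv_const_mul_field']

/-- for γ = -2, c > 0, a = 3/(8c), the function
u(x,t) = -2(√((ct² - a)/x) - 1) solves u_tt = [(1 - u/2)^{-3}]_xx on x > 0, ct² > a. -/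
theorem stmt_7 (c a : ℝ) (hc : 0 < c) (ha : a = 3 / (8 * c))
    (u : ℝ → ℝ → ℝ)
    (hu : ∀ x t, u x t = -2 * (Real.sqrt ((c * t ^ 2 - a) / x) - 1)) :
    ∀ x t : ℝ, 0 < x → a < c * t ^ 2 →
      deriv (deriv (fun s => u x s)) t
        = deriv (deriv (fun s => (1 - u s t / 2) ^ (-3 : ℝ))) x := by
  intro x t hx hat
  set P := c * t ^ 2 - a with hP_def
  have hP : 0 < P := sub_pos.2 hat
  have htime : (fun s => u x s) = fun s => 2 - 2 / √x * √(c * s ^ 2 - a) := by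
    funext s
    rw [hu, sqrt_div' _ hx.le]
    ring
  have hspace : (fun y => (1 - u y t / 2) ^ (-3 : ℝ)) =ᶠ[𝓝 x]
      fun y => (P ^ (3 / 2 : ℝ))⁻¹ * y ^ (3 / 2 : ℝ) := by
    filter_upwards [Ioi_mem_nhds hx] with y hy
    rw [hu, show 1 - -2 * (√(P / y) - 1) / 2 = √(P / y) by ring,
      sqrt_div_rpow_neg hP.le (le_of_lt hy), div_eq_inv_mul]
  rw [htime, hspace.deriv.deriv_eq]
  simp only [deriv_const_sub', deriv.fun_neg', deriv_const_mul_field', deriv_deriv_rpow_const]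
  rw [deriv_deriv_sqrt_quadratic hat, ← hP_def, show (3 / 2 - 1 - 1 : ℝ) = -(1 / 2) by norm_num,
    rpow_neg hx.le, ← sqrt_eq_rpow, ha]
  field_simp
  norm_num
end

section
/- Let T = √(2(γ+2)/(γ-2))(Y + X₂), S = √(2(γ+2)/(γ-2))(Y - X₂), Z' = (2(γ+2)/(γ-2)) Z, where X₂ = ∂ₜ, Z = ((γ-2)/(γ+2)) t ∂ₜ - (2γ/(γ+2))(1 + u/γ) ∂ᵤ, and Y = ((γ-2)/(γ+2))(t²/2) ∂ₜ - (2γt/(γ+2))(1 + u/γ) ∂ᵤ. Then [Z', T] = 2S, [T, S] = 2Z', and [S, Z'] = -2T, i.e., T, S, Z' realize the sl(2,ℝ) commutation relations. -/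
/-- ∂ₜ acting on functions of (t,u). -/
noncomputable def pdT (f : ℝ × ℝ → ℝ) : ℝ × ℝ → ℝ :=
  fun p => deriv (fun s => f (s, p.2)) p.1

/-- ∂ᵤ acting on functions of (t,u). -/
noncomputable def pdU (f : ℝ × ℝ → ℝ) : ℝ × ℝ → ℝ :=
  fun p => deriv (fun s => f (p.1, s)) p.2

/-- X₂ = ∂ₜ. -/
noncomputable def X2op (f : ℝ × ℝ → ℝ) : ℝ × ℝ → ℝ := pdT f

/-- Z = ((γ-2)/(γ+2)) t ∂ₜ - (2γ/(γ+2))(1 + u/γ) ∂ᵤ. -/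
noncomputable def Zop (γ : ℝ) (f : ℝ × ℝ → ℝ) : ℝ × ℝ → ℝ :=
  fun p => ((γ - 2) / (γ + 2)) * p.1 * pdT f p
    - (2 * γ / (γ + 2)) * (1 + p.2 / γ) * pdU f p

/-- Y = ((γ-2)/(γ+2))(t²/2) ∂ₜ - (2γt/(γ+2))(1 + u/γ) ∂ᵤ. -/
noncomputable def Yop (γ : ℝ) (f : ℝ × ℝ → ℝ) : ℝ × ℝ → ℝ :=
  fun p => ((γ - 2) / (γ + 2)) * (p.1 ^ 2 / 2) * pdT f p
    - (2 * γ * p.1 / (γ + 2)) * (1 + p.2 / γ) * pdU f p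

/-- T = √(2(γ+2)/(γ-2))(Y + X₂). -/
noncomputable def Tsl (γ : ℝ) (f : ℝ × ℝ → ℝ) : ℝ × ℝ → ℝ :=
  fun p => Real.sqrt (2 * (γ + 2) / (γ - 2)) * (Yop γ f p + X2op f p)

/-- S = √(2(γ+2)/(γ-2))(Y - X₂). -/
noncomputable def Sop (γ : ℝ) (f : ℝ × ℝ → ℝ) : ℝ × ℝ → ℝ :=
  fun p => Real.sqrt (2 * (γ + 2) / (γ - 2)) * (Yop γ f p - X2op f p)

/-- Z' = (2(γ+2)/(γ-2)) Z. -/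
noncomputable def Z'op (γ : ℝ) (f : ℝ × ℝ → ℝ) : ℝ × ℝ → ℝ :=
  fun p => (2 * (γ + 2) / (γ - 2)) * Zop γ f p

lemma sliceT_diff {g : ℝ × ℝ → ℝ} (hg : ContDiff ℝ (⊤ : ℕ∞) g) (t u : ℝ) :
    DifferentiableAt ℝ (fun s => g (s, u)) t :=
  ((hg.differentiable (by simp)) (t, u)).comp t
    (differentiableAt_id.prodMk (differentiableAt_const u))

lemma sliceU_diff {g : ℝ × ℝ → ℝ} (hg : ContDiff ℝ (⊤ : ℕ∞) g) (t u : ℝ) :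
    DifferentiableAt ℝ (fun s => g (t, s)) u :=
  ((hg.differentiable (by simp)) (t, u)).comp u
    ((differentiableAt_const t).prodMk differentiableAt_id)

lemma hasDerivAt_pdT {g : ℝ × ℝ → ℝ} (hg : ContDiff ℝ (⊤ : ℕ∞) g) (t u : ℝ) :
    HasDerivAt (fun s => g (s, u)) (pdT g (t, u)) t :=
  (sliceT_diff hg t u).hasDerivAt

lemma hasDerivAt_pdU {g : ℝ × ℝ → ℝ} (hg : ContDiff ℝ (⊤ : ℕ∞) g) (t u : ℝ) :
    HasDerivAt (fun s => g (t, s)) (pdU g (t, u)) u :=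
  (sliceU_diff hg t u).hasDerivAt

lemma pdT_eq_fderiv {g : ℝ × ℝ → ℝ} (hg : ContDiff ℝ (⊤ : ℕ∞) g) :
    pdT g = fun p => fderiv ℝ g p (1, 0) := by
  funext p
  have h1 : HasFDerivAt (fun s : ℝ => (s, p.2))
      ((ContinuousLinearMap.id ℝ ℝ).prod 0) p.1 :=
    (hasFDerivAt_id p.1).prodMk (hasFDerivAt_const p.2 p.1)
  have h2 : HasFDerivAt g (fderiv ℝ g p) (p.1, p.2) := by
    rw [Prod.mk.eta]; exact (hg.differentiable (by simp) p).hasFDerivAt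
  have h3 := (h2.comp p.1 h1).hasDerivAt
  simpa [pdT, Function.comp_def] using h3.deriv

lemma pdU_eq_fderiv {g : ℝ × ℝ → ℝ} (hg : ContDiff ℝ (⊤ : ℕ∞) g) :
    pdU g = fun p => fderiv ℝ g p (0, 1) := by
  funext p
  have h1 : HasFDerivAt (fun s : ℝ => (p.1, s))
      ((0 : ℝ →L[ℝ] ℝ).prod (ContinuousLinearMap.id ℝ ℝ)) p.2 :=
    (hasFDerivAt_const p.1 p.2).prodMk (hasFDerivAt_id p.2)
  have h2 : HasFDerivAt g (fderiv ℝ g p) (p.1, p.2) := by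
    rw [Prod.mk.eta]; exact (hg.differentiable (by simp) p).hasFDerivAt
  have h3 := (h2.comp p.2 h1).hasDerivAt
  simpa [pdU, Function.comp_def] using h3.deriv

lemma pdT_smooth {g : ℝ × ℝ → ℝ} (hg : ContDiff ℝ (⊤ : ℕ∞) g) : ContDiff ℝ (⊤ : ℕ∞) (pdT g) := by
  rw [pdT_eq_fderiv hg]
  exact (hg.fderiv_right (by simp)).clm_apply contDiff_const

lemma pdU_smooth {g : ℝ × ℝ → ℝ} (hg : ContDiff ℝ (⊤ : ℕ∞) g) : ContDiff ℝ (⊤ : ℕ∞) (pdU g) := by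
  rw [pdU_eq_fderiv hg]
  exact (hg.fderiv_right (by simp)).clm_apply contDiff_const

lemma clairaut {g : ℝ × ℝ → ℝ} (hg : ContDiff ℝ (⊤ : ℕ∞) g) (p : ℝ × ℝ) :
    pdT (pdU g) p = pdU (pdT g) p := by
  have hd : ∀ y, HasFDerivAt g (fderiv ℝ g y) y :=
    fun y => (hg.differentiable (by simp) y).hasFDerivAt
  have h2 : HasFDerivAt (fderiv ℝ g) (fderiv ℝ (fderiv ℝ g) p) p :=
    (((hg.fderiv_right (m := (⊤ : ℕ∞)) (by simp)).differentiable (by simp)) p).hasFDerivAt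
  have hsymm := second_derivative_symmetric hd h2 (1, 0) (0, 1)
  have e1 : pdT (pdU g) p = fderiv ℝ (fderiv ℝ g) p (1, 0) (0, 1) := by
    rw [pdT_eq_fderiv (pdU_smooth hg), pdU_eq_fderiv hg]
    beta_reduce
    rw [fderiv_clm_apply (((hg.fderiv_right (m := (⊤ : ℕ∞)) (by simp)).differentiable (by simp)) p)
      (differentiableAt_const _)]
    simp
  have e2 : pdU (pdT g) p = fderiv ℝ (fderiv ℝ g) p (0, 1) (1, 0) := by
    rw [pdU_eq_fderiv (pdT_smooth hg), pdT_eq_fderiv hg]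
    beta_reduce
    rw [fderiv_clm_apply (((hg.fderiv_right (m := (⊤ : ℕ∞)) (by simp)).differentiable (by simp)) p)
      (differentiableAt_const _)]
    simp
  rw [e1, e2, hsymm]
noncomputable def Vop (γ a₀ a₁ a₂ d₀ d₁ : ℝ) (f : ℝ × ℝ → ℝ) : ℝ × ℝ → ℝ :=
  fun p => (a₀ + a₁ * p.1 + a₂ * p.1 ^ 2) * pdT f p
    + (d₀ + d₁ * p.1) * (γ + p.2) * pdU f p

lemma Vop_smooth {f : ℝ × ℝ → ℝ} (hf : ContDiff ℝ (⊤ : ℕ∞) f) (γ a₀ a₁ a₂ d₀ d₁ : ℝ) :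
    ContDiff ℝ (⊤ : ℕ∞) (Vop γ a₀ a₁ a₂ d₀ d₁ f) := by
  unfold Vop
  have h1 : ContDiff ℝ (⊤ : ℕ∞) (fun p : ℝ × ℝ => a₀ + a₁ * p.1 + a₂ * p.1 ^ 2) := by fun_prop
  have h2 : ContDiff ℝ (⊤ : ℕ∞) (fun p : ℝ × ℝ => (d₀ + d₁ * p.1) * (γ + p.2)) := by fun_prop
  exact (h1.mul (pdT_smooth hf)).add (h2.mul (pdU_smooth hf))

lemma pdT_Vop {f : ℝ × ℝ → ℝ} (hf : ContDiff ℝ (⊤ : ℕ∞) f) (γ a₀ a₁ a₂ d₀ d₁ t u : ℝ) :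
    pdT (Vop γ a₀ a₁ a₂ d₀ d₁ f) (t, u)
      = (a₁ + a₂ * (2 * t)) * pdT f (t, u)
      + (a₀ + a₁ * t + a₂ * t ^ 2) * pdT (pdT f) (t, u)
      + d₁ * (γ + u) * pdU f (t, u)
      + (d₀ + d₁ * t) * (γ + u) * pdT (pdU f) (t, u) := by
  have hpoly : HasDerivAt (fun s : ℝ => a₀ + a₁ * s + a₂ * s ^ 2) (a₁ + a₂ * (2 * t)) t := by
    have h1 : HasDerivAt (fun s : ℝ => a₀ + a₁ * s) a₁ t := by
      simpa using ((hasDerivAt_id t).const_mul a₁).const_add a₀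
    have h2 : HasDerivAt (fun s : ℝ => a₂ * s ^ 2) (a₂ * (2 * t)) t := by
      simpa using (hasDerivAt_pow 2 t).const_mul a₂
    exact h1.add h2
  have hlin : HasDerivAt (fun s : ℝ => (d₀ + d₁ * s) * (γ + u)) (d₁ * (γ + u)) t := by
    have h1 : HasDerivAt (fun s : ℝ => d₀ + d₁ * s) d₁ t := by
      simpa using ((hasDerivAt_id t).const_mul d₁).const_add d₀
    simpa using h1.mul_const (γ + u)
  have H := ((hpoly.mul (hasDerivAt_pdT (pdT_smooth hf) t u)).add
    (hlin.mul (hasDerivAt_pdT (pdU_smooth hf) t u)))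
  have : pdT (Vop γ a₀ a₁ a₂ d₀ d₁ f) (t, u)
      = deriv (fun s => (a₀ + a₁ * s + a₂ * s ^ 2) * pdT f (s, u)
          + (d₀ + d₁ * s) * (γ + u) * pdU f (s, u)) t := rfl
  rw [this]; refine H.deriv.trans ?_; ring

lemma pdU_Vop {f : ℝ × ℝ → ℝ} (hf : ContDiff ℝ (⊤ : ℕ∞) f) (γ a₀ a₁ a₂ d₀ d₁ t u : ℝ) :
    pdU (Vop γ a₀ a₁ a₂ d₀ d₁ f) (t, u)
      = (a₀ + a₁ * t + a₂ * t ^ 2) * pdU (pdT f) (t, u)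
      + (d₀ + d₁ * t) * pdU f (t, u)
      + (d₀ + d₁ * t) * (γ + u) * pdU (pdU f) (t, u) := by
  have hlin : HasDerivAt (fun s : ℝ => (d₀ + d₁ * t) * (γ + s)) (d₀ + d₁ * t) u := by
    simpa using ((hasDerivAt_id u).const_add γ).const_mul (d₀ + d₁ * t)
  have H := (((hasDerivAt_pdU (pdT_smooth hf) t u).const_mul (a₀ + a₁ * t + a₂ * t ^ 2)).add
    (hlin.mul (hasDerivAt_pdU (pdU_smooth hf) t u)))
  have : pdU (Vop γ a₀ a₁ a₂ d₀ d₁ f) (t, u)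
      = deriv (fun s => (a₀ + a₁ * t + a₂ * t ^ 2) * pdT f (t, s)
          + (d₀ + d₁ * t) * (γ + s) * pdU f (t, s)) u := rfl
  rw [this]; refine H.deriv.trans ?_; ring

lemma comm_Vop {f : ℝ × ℝ → ℝ} (hf : ContDiff ℝ (⊤ : ℕ∞) f)
    (γ a₀ a₁ a₂ d₀ d₁ b₀ b₁ b₂ e₀ e₁ t u : ℝ) :
    Vop γ a₀ a₁ a₂ d₀ d₁ (Vop γ b₀ b₁ b₂ e₀ e₁ f) (t, u)
      - Vop γ b₀ b₁ b₂ e₀ e₁ (Vop γ a₀ a₁ a₂ d₀ d₁ f) (t, u)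
      = ((a₀ + a₁ * t + a₂ * t ^ 2) * (b₁ + 2 * b₂ * t)
          - (b₀ + b₁ * t + b₂ * t ^ 2) * (a₁ + 2 * a₂ * t)) * pdT f (t, u)
      + ((a₀ + a₁ * t + a₂ * t ^ 2) * e₁
          - (b₀ + b₁ * t + b₂ * t ^ 2) * d₁) * (γ + u) * pdU f (t, u) := by
  have E1 : Vop γ a₀ a₁ a₂ d₀ d₁ (Vop γ b₀ b₁ b₂ e₀ e₁ f) (t, u)
      = (a₀ + a₁ * t + a₂ * t ^ 2) * pdT (Vop γ b₀ b₁ b₂ e₀ e₁ f) (t, u)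
      + (d₀ + d₁ * t) * (γ + u) * pdU (Vop γ b₀ b₁ b₂ e₀ e₁ f) (t, u) := rfl
  have E2 : Vop γ b₀ b₁ b₂ e₀ e₁ (Vop γ a₀ a₁ a₂ d₀ d₁ f) (t, u)
      = (b₀ + b₁ * t + b₂ * t ^ 2) * pdT (Vop γ a₀ a₁ a₂ d₀ d₁ f) (t, u)
      + (e₀ + e₁ * t) * (γ + u) * pdU (Vop γ a₀ a₁ a₂ d₀ d₁ f) (t, u) := rfl
  rw [E1, E2, pdT_Vop hf, pdT_Vop hf, pdU_Vop hf, pdU_Vop hf,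
    clairaut hf (t, u)]
  ring
section ident
variable {γ : ℝ} (hγ : 2 < γ)
include hγ

lemma Tsl_eq (f : ℝ × ℝ → ℝ) :
    Tsl γ f = Vop γ (Real.sqrt (2 * (γ + 2) / (γ - 2))) 0
      (Real.sqrt (2 * (γ + 2) / (γ - 2)) * (γ - 2) / ((γ + 2) * 2)) 0
      (-(2 * Real.sqrt (2 * (γ + 2) / (γ - 2)) / (γ + 2))) f := by
  have h0 : γ ≠ 0 := by linarith
  have h2 : γ + 2 ≠ 0 := by linarith
  funext p
  simp only [Tsl, Vop, Yop, X2op]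
  generalize Real.sqrt (2 * (γ + 2) / (γ - 2)) = k
  field_simp
  ring

lemma Sop_eq (f : ℝ × ℝ → ℝ) :
    Sop γ f = Vop γ (-Real.sqrt (2 * (γ + 2) / (γ - 2))) 0
      (Real.sqrt (2 * (γ + 2) / (γ - 2)) * (γ - 2) / ((γ + 2) * 2)) 0
      (-(2 * Real.sqrt (2 * (γ + 2) / (γ - 2)) / (γ + 2))) f := by
  have h0 : γ ≠ 0 := by linarith
  have h2 : γ + 2 ≠ 0 := by linarith
  funext p
  simp only [Sop, Vop, Yop, X2op]
  generalize Real.sqrt (2 * (γ + 2) / (γ - 2)) = k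
  field_simp
  ring

lemma Z'op_eq (f : ℝ × ℝ → ℝ) :
    Z'op γ f = Vop γ 0 2 0 (-(4 / (γ - 2))) 0 f := by
  have h0 : γ ≠ 0 := by linarith
  have h2 : γ + 2 ≠ 0 := by linarith
  have h3 : γ - 2 ≠ 0 := by linarith
  funext p
  simp only [Z'op, Zop, Vop]
  field_simp
  ring

end ident

/-- T, S, Z' realize the sl(2,ℝ) commutation relations
[Z',T] = 2S, [T,S] = 2Z', [S,Z'] = -2T (as commutators of derivations on smooth
functions of (t,u)). -/
theorem stmt_9 (γ : ℝ) (hγ : 2 < γ) :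
    ∀ f : ℝ × ℝ → ℝ, ContDiff ℝ (⊤ : ℕ∞) f → ∀ p : ℝ × ℝ,
      (Z'op γ (Tsl γ f) p - Tsl γ (Z'op γ f) p = 2 * Sop γ f p) ∧
      (Tsl γ (Sop γ f) p - Sop γ (Tsl γ f) p = 2 * Z'op γ f p) ∧
      (Sop γ (Z'op γ f) p - Z'op γ (Sop γ f) p = -2 * Tsl γ f p) := by
  intro f hf p
  obtain ⟨t, u⟩ := p
  have h0 : γ ≠ 0 := by linarith
  have h2 : (γ : ℝ) + 2 ≠ 0 := by linarith
  have h3 : (γ : ℝ) - 2 ≠ 0 := by linarith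
  have hknn : (0:ℝ) ≤ 2 * (γ + 2) / (γ - 2) := div_nonneg (by linarith) (by linarith)
  refine ⟨?_, ?_, ?_⟩
  · rw [Tsl_eq hγ, Z'op_eq hγ, Sop_eq hγ, Tsl_eq hγ, Z'op_eq hγ,
      comm_Vop hf]
    simp only [Vop]
    generalize Real.sqrt (2 * (γ + 2) / (γ - 2)) = k
    field_simp
    ring
  · rw [Sop_eq hγ, Tsl_eq hγ, Sop_eq hγ, Tsl_eq hγ, Z'op_eq hγ, comm_Vop hf]
    simp only [Vop]
    have hk := Real.sq_sqrt hknn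
    revert hk
    generalize Real.sqrt (2 * (γ + 2) / (γ - 2)) = k
    generalize pdT f (t, u) = P
    generalize pdU f (t, u) = Q
    intro hk
    have h3' : -2 + γ ≠ 0 := by linarith
    ring_nf
    rw [hk]
    field_simp
    ring
  · rw [Z'op_eq hγ, Sop_eq hγ, Z'op_eq hγ, Sop_eq hγ, Tsl_eq hγ, comm_Vop hf]
    simp only [Vop]
    generalize Real.sqrt (2 * (γ + 2) / (γ - 2)) = k
    field_simp
    ring
end
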